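/- In the two-layer linear model where outcomes satisfy Y_a(t) = α₀(t) + α₁(t)ᵀ x(t) + α₂(t)ᵀ S_a(t) for a ∈ {treatment, control}, with states S_T, S_C evolving as in the IRE-VCDP recursion differing only in the presence of the treatment term γ₁, the Global Average Treatment Effect GATE = Σ_{t=1}^m [Y_T(t) − Y_C(t)] equals Σ_{t=1}^m α₂(t)ᵀ Σ_{k=1}^{t-1} (∏_{l=k+1}^{t-1} Φ₁(l)) γ₁(k). -/
import Mathlib


open Finset Matrix

/-- Ordered matrix product `Φ b * Φ (b-1) * ⋯ * Φ a`, equal to the identity when `b < a`. -/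
noncomputable def mprod {q : ℕ} (Φ : ℕ → Matrix (Fin q) (Fin q) ℝ) (a b : ℕ) :
    Matrix (Fin q) (Fin q) ℝ :=
  ((List.range' a (b + 1 - a)).reverse.map Φ).prod

lemma mprod_empty {q : ℕ} (Φ : ℕ → Matrix (Fin q) (Fin q) ℝ) {a b : ℕ} (h : b + 1 ≤ a) :
    mprod Φ a b = 1 := by
  unfold mprod
  have : b + 1 - a = 0 := by omega
  simp [this]

lemma mprod_succ {q : ℕ} (Φ : ℕ → Matrix (Fin q) (Fin q) ℝ) {a b : ℕ} (h : a ≤ b + 1) :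
    mprod Φ a (b + 1) = Φ (b + 1) * mprod Φ a b := by
  unfold mprod
  have h1 : b + 1 + 1 - a = (b + 1 - a) + 1 := by omega
  have h2 : a + (b + 1 - a) = b + 1 := by omega
  rw [h1, List.range'_concat]
  simp [h2]

lemma state_diff {q p : ℕ}
    (x : ℕ → Fin p → ℝ)
    (ST SC γ₀ γ₁ : ℕ → Fin q → ℝ)
    (Φ₀ : ℕ → Matrix (Fin q) (Fin p) ℝ) (Φ₁ : ℕ → Matrix (Fin q) (Fin q) ℝ)
    (hT : ∀ t, 1 ≤ t →
      ST (t + 1) = γ₀ t + γ₁ t + (Φ₀ t).mulVec (x t) + (Φ₁ t).mulVec (ST t))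
    (hC : ∀ t, 1 ≤ t →
      SC (t + 1) = γ₀ t + (Φ₀ t).mulVec (x t) + (Φ₁ t).mulVec (SC t))
    (hinit : ST 1 = SC 1) :
    ∀ t, 1 ≤ t → ST t - SC t
      = ∑ k ∈ Finset.Icc 1 (t - 1), (mprod Φ₁ (k + 1) (t - 1)).mulVec (γ₁ k) := by
  intro t ht
  induction t, ht using Nat.le_induction with
  | base => simp [hinit]
  | succ t ht ih =>
    have hrec : ST (t + 1) - SC (t + 1) = γ₁ t + (Φ₁ t).mulVec (ST t - SC t) := by
      rw [hT t ht, hC t ht, Matrix.mulVec_sub]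
      abel
    have ht1 : t - 1 + 1 = t := by omega
    have hlin := map_sum ((Φ₁ t).mulVecLin)
      (fun k => (mprod Φ₁ (k + 1) (t - 1)).mulVec (γ₁ k)) (Finset.Icc 1 (t - 1))
    simp only [Matrix.mulVecLin_apply] at hlin
    rw [hrec, ih, hlin]
    have hsum : (∑ k ∈ Finset.Icc 1 (t - 1),
        (Φ₁ t).mulVec ((mprod Φ₁ (k + 1) (t - 1)).mulVec (γ₁ k)))
        = ∑ k ∈ Finset.Icc 1 (t - 1), (mprod Φ₁ (k + 1) t).mulVec (γ₁ k) := by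
      refine Finset.sum_congr rfl fun k hk => ?_
      simp only [Finset.mem_Icc] at hk
      have : mprod Φ₁ (k + 1) t = Φ₁ t * mprod Φ₁ (k + 1) (t - 1) := by
        have := mprod_succ Φ₁ (a := k + 1) (b := t - 1) (by omega)
        rwa [ht1] at this
      rw [this, Matrix.mulVec_mulVec]
    rw [hsum]
    have hsplit : ∑ k ∈ Finset.Icc 1 (t + 1 - 1), (mprod Φ₁ (k + 1) (t + 1 - 1)).mulVec (γ₁ k)
        = (∑ k ∈ Finset.Icc 1 (t - 1), (mprod Φ₁ (k + 1) t).mulVec (γ₁ k))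
          + (mprod Φ₁ (t + 1) t).mulVec (γ₁ t) := by
      have h2 : t + 1 - 1 = (t - 1) + 1 := by omega
      rw [h2, Finset.sum_Icc_succ_top (by omega), ht1]
    rw [hsplit, mprod_empty Φ₁ (by omega), Matrix.one_mulVec]
    abel

/-- In the two-layer linear IRE-VCDP model with shared coefficients, the GATE
`∑_{t=1}^m (Y_T(t) − Y_C(t))` equals
`∑_{t=1}^m α₂(t)ᵀ ∑_{k=1}^{t-1} (∏_{l=k+1}^{t-1} Φ₁(l)) γ₁(k)`. -/
theorem gate_closed_form {q p : ℕ} (m : ℕ)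
    (α₀ : ℕ → ℝ) (α₁ : ℕ → Fin p → ℝ) (α₂ : ℕ → Fin q → ℝ)
    (x : ℕ → Fin p → ℝ)
    (ST SC γ₀ γ₁ : ℕ → Fin q → ℝ)
    (Φ₀ : ℕ → Matrix (Fin q) (Fin p) ℝ) (Φ₁ : ℕ → Matrix (Fin q) (Fin q) ℝ)
    (hT : ∀ t, 1 ≤ t →
      ST (t + 1) = γ₀ t + γ₁ t + (Φ₀ t).mulVec (x t) + (Φ₁ t).mulVec (ST t))
    (hC : ∀ t, 1 ≤ t →
      SC (t + 1) = γ₀ t + (Φ₀ t).mulVec (x t) + (Φ₁ t).mulVec (SC t))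
    (hinit : ST 1 = SC 1) :
    ∑ t ∈ Finset.Icc 1 m,
        ((α₀ t + α₁ t ⬝ᵥ x t + α₂ t ⬝ᵥ ST t) - (α₀ t + α₁ t ⬝ᵥ x t + α₂ t ⬝ᵥ SC t))
      = ∑ t ∈ Finset.Icc 1 m,
          α₂ t ⬝ᵥ (∑ k ∈ Finset.Icc 1 (t - 1),
            (mprod Φ₁ (k + 1) (t - 1)).mulVec (γ₁ k)) := by
  refine Finset.sum_congr rfl fun t ht => ?_
  simp only [Finset.mem_Icc] at ht
  rw [← state_diff x ST SC γ₀ γ₁ Φ₀ Φ₁ hT hC hinit t ht.1, dotProduct_sub]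
  ring
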